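/- arXiv:2106.07609 — 6 statements merged into one kernel-verified Lean document; each statement's English description precedes it below -/
import Mathlib

section
/- Let ω ∈ ℝ, ω ≠ 0, A, B ∈ ℝ, and y(t) = A · Real.cos (ω·t) + B · Real.sin (ω·t). Then for every t ∈ ℝ and every h with Real.sin (ω·h/2) ≠ 0, the central second difference with the spectral denominator is exact: (y(t+h) − 2·y(t) + y(t−h)) / ((2/ω) · Real.sin (ω·h/2))² = −ω² · y(t). -/
theorem ssp2_harmonic_exact (ω : ℝ) (hω : ω ≠ 0) (A B : ℝ) (y : ℝ → ℝ)
    (hy : ∀ t, y t = A * Real.cos (ω * t) + B * Real.sin (ω * t)) :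
    ∀ t h : ℝ, Real.sin (ω * h / 2) ≠ 0 →
      (y (t + h) - 2 * y t + y (t - h)) / ((2 / ω) * Real.sin (ω * h / 2)) ^ 2
        = -ω ^ 2 * y t := by
  intro t h hs
  have key : Real.cos (ω * h) = 1 - 2 * Real.sin (ω * h / 2) ^ 2 := by
    have d := Real.cos_two_mul (ω * h / 2)
    have e : 2 * (ω * h / 2) = ω * h := by ring
    rw [e] at d
    have := Real.sin_sq_add_cos_sq (ω * h / 2)
    linarith
  have num : y (t + h) - 2 * y t + y (t - h)
      = -(4 * Real.sin (ω * h / 2) ^ 2) * y t := by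
    simp only [hy, mul_add, mul_sub, Real.cos_add, Real.cos_sub, Real.sin_add, Real.sin_sub]
    linear_combination (2 * (A * Real.cos (ω * t) + B * Real.sin (ω * t))) * key
  rw [num]
  field_simp
  ring
end

section
/- Let λ ∈ ℝ, λ ≠ 0, A, B ∈ ℝ, and y(t) = A · Real.exp (λ·t) + B · Real.exp (−λ·t). Then for every t ∈ ℝ and every h ≠ 0, the central second difference with the hyperbolic spectral denominator is exact: (y(t+h) − 2·y(t) + y(t−h)) / ((2/λ) · Real.sinh (λ·h/2))² = λ² · y(t). -/
/-! Both modes `e^{±λt}` satisfy `y(t+h) + y(t-h) = 2 cosh(λh) y(t)`, so the central second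
difference is `2 (cosh(λh) - 1) y(t) = 4 sinh²(λh/2) y(t)`, which is `λ²` times the squared
hyperbolic denominator times `y(t)`. -/

open Real

lemma Real.exp_add_add_exp_sub (a b : ℝ) :
    exp (a + b) + exp (a - b) = 2 * cosh b * exp a := by
  rw [cosh_eq, exp_add, exp_sub, exp_neg]
  field_simp

lemma Real.cosh_two_mul_sub_one (x : ℝ) : cosh (2 * x) - 1 = 2 * sinh x ^ 2 := by
  rw [cosh_two_mul, cosh_sq]
  ring

lemma exp_combination_add_add_sub {lam A B : ℝ} {y : ℝ → ℝ}
    (hy : ∀ t, y t = A * exp (lam * t) + B * exp (-lam * t)) (t h : ℝ) :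
    y (t + h) + y (t - h) = 2 * cosh (lam * h) * y t := by
  have hexp (c : ℝ) : exp (c * (t + h)) + exp (c * (t - h)) = 2 * cosh (c * h) * exp (c * t) := by
    rw [mul_add, mul_sub, exp_add_add_exp_sub]
  have hB := hexp (-lam)
  rw [neg_mul lam h, cosh_neg] at hB
  simp only [hy]
  linear_combination A * hexp lam + B * hB

lemma exp_combination_central_second_difference {lam A B : ℝ} {y : ℝ → ℝ}
    (hy : ∀ t, y t = A * exp (lam * t) + B * exp (-lam * t)) (t h : ℝ) :
    y (t + h) - 2 * y t + y (t - h) = 4 * sinh (lam * h / 2) ^ 2 * y t := by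
  have hcosh := cosh_two_mul_sub_one (lam * h / 2)
  rw [show 2 * (lam * h / 2) = lam * h by ring] at hcosh
  linear_combination exp_combination_add_add_sub hy t h + 2 * y t * hcosh

theorem ssp2_hyperbolic_exact (lam : ℝ) (hlam : lam ≠ 0) (A B : ℝ) (y : ℝ → ℝ)
    (hy : ∀ t, y t = A * Real.exp (lam * t) + B * Real.exp (-lam * t)) :
    ∀ t h : ℝ, h ≠ 0 →
      (y (t + h) - 2 * y t + y (t - h)) / ((2 / lam) * Real.sinh (lam * h / 2)) ^ 2
        = lam ^ 2 * y t := by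
  intro t h hh
  have hsinh : sinh (lam * h / 2) ≠ 0 :=
    sinh_ne_zero.mpr (div_ne_zero (mul_ne_zero hlam hh) two_ne_zero)
  rw [exp_combination_central_second_difference hy]
  field_simp
  ring
end

section
/- Let a, b > 0, set c = Real.sqrt (b/a), and let u(x) = A · Real.cos (c·x) + B · Real.sin (c·x) for constants A, B ∈ ℝ. Then for every x ∈ ℝ and every Δx with Real.sin (c·Δx/2) ≠ 0, the Mickens NSFD space scheme is exact: a · (u(x+Δx) − 2·u(x) + u(x−Δx)) / (ψ(Δx))² + b · u(x) = 0, where ψ(Δx) = 2 · Real.sqrt (a/b) · Real.sin (Real.sqrt (b/a) · Δx/2). -/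
/-! The second difference with step `h` of any combination of `cos (c x)` and `sin (c x)` is the
function times `-4 sin² (c h / 2)`, while `ψ² = 4 (a / b) sin² (c h / 2)`; so the discrete
operator `a Δ²u / ψ²` equals `-b u` exactly. -/

open Real

theorem trig_second_difference {A B c : ℝ} {u : ℝ → ℝ}
    (hu : ∀ x, u x = A * cos (c * x) + B * sin (c * x)) (x h : ℝ) :
    u (x + h) - 2 * u x + u (x - h) = -4 * sin (c * h / 2) ^ 2 * u x := by
  have hcos : cos (c * h) = 1 - 2 * sin (c * h / 2) ^ 2 := by
    rw [← cos_two_mul_eq_one_sub, mul_div_cancel₀ _ two_ne_zero]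
  simp only [hu, mul_add, mul_sub, cos_add, cos_sub, sin_add, sin_sub, hcos]
  ring

theorem nsfd_space_scheme_exact (a b : ℝ) (ha : 0 < a) (hb : 0 < b) (A B : ℝ) (u : ℝ → ℝ)
    (hu : ∀ x, u x = A * Real.cos (Real.sqrt (b / a) * x) + B * Real.sin (Real.sqrt (b / a) * x)) :
    ∀ x Δx : ℝ, Real.sin (Real.sqrt (b / a) * Δx / 2) ≠ 0 →
      a * (u (x + Δx) - 2 * u x + u (x - Δx)) /
          (2 * Real.sqrt (a / b) * Real.sin (Real.sqrt (b / a) * Δx / 2)) ^ 2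
        + b * u x = 0 := by
  intro x Δx hs
  rw [trig_second_difference hu, mul_pow, mul_pow, sq_sqrt (div_pos ha hb).le]
  field_simp
  ring
end

section
/- Let a, b, k ∈ ℝ with k ≠ 0 and μ := b − a·k² ≠ 0, and let u(x, t) = Real.exp (μ·t) · Real.cos (k·x). Then for all (x, t), all Δt ≠ 0, and all Δx with Real.sin (k·Δx/2) ≠ 0, u satisfies the full ESDDFD scheme exactly: (u(x, t+Δt) − u(x, t)) / φ(Δt) = a · (u(x+Δx, t) − 2·u(x, t) + u(x−Δx, t)) / (ψ(Δx))² + b · u(x, t), where φ(Δt) = (Real.exp (μ·Δt) − 1)/μ and ψ(Δx) = (2/k) · Real.sin (k·Δx/2). -/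
theorem esddfd_full_scheme_exact (a b k : ℝ) (hk : k ≠ 0) (hμ : b - a * k ^ 2 ≠ 0)
    (u : ℝ → ℝ → ℝ)
    (hu : ∀ x t, u x t = Real.exp ((b - a * k ^ 2) * t) * Real.cos (k * x)) :
    ∀ x t Δt Δx : ℝ, Δt ≠ 0 → Real.sin (k * Δx / 2) ≠ 0 →
      (u x (t + Δt) - u x t) / ((Real.exp ((b - a * k ^ 2) * Δt) - 1) / (b - a * k ^ 2))
        = a * (u (x + Δx) t - 2 * u x t + u (x - Δx) t) / ((2 / k) * Real.sin (k * Δx / 2)) ^ 2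
          + b * u x t := by
  intro x t Δt Δx hΔt hsin
  have hE : Real.exp ((b - a * k ^ 2) * Δt) - 1 ≠ 0 := by
    have h : (b - a * k ^ 2) * Δt ≠ 0 := mul_ne_zero hμ hΔt
    simpa [sub_eq_zero, Real.exp_eq_one_iff] using h
  have hc1 : Real.cos (k * (x + Δx))
      = Real.cos (k * x) * Real.cos (k * Δx) - Real.sin (k * x) * Real.sin (k * Δx) := by
    rw [mul_add, Real.cos_add]
  have hc2 : Real.cos (k * (x - Δx))
      = Real.cos (k * x) * Real.cos (k * Δx) + Real.sin (k * x) * Real.sin (k * Δx) := by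
    rw [mul_sub, Real.cos_sub]
  have hc3 : Real.cos (k * Δx) = 1 - 2 * Real.sin (k * Δx / 2) ^ 2 := by
    have h2 : k * Δx = 2 * (k * Δx / 2) := by ring
    conv_lhs => rw [h2, Real.cos_two_mul]
    have h3 := Real.sin_sq_add_cos_sq (k * Δx / 2)
    linarith
  simp only [hu]
  rw [mul_add, Real.exp_add, hc1, hc2, hc3]
  field_simp
  ring
end

section
/- Let f : ℝ → ℝ be differentiable at a point t > 0 and let 0 < α ≤ 1. Then the conformable fractional derivative of f at t exists and equals t^{1−α}·f'(t); that is, the limit of (f(t + ε·t^{1−α}) − f(t))/ε as ε → 0 (through nonzero values) exists and equals t^(1−α) · deriv f t, where t^(1−α) denotes the real power Real.rpow t (1−α). -/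
open Filter Topology

theorem HasDerivAt.tendsto_slope_comp_add_mul {𝕜 F : Type*} [NontriviallyNormedField 𝕜]
    [NormedAddCommGroup F] [NormedSpace 𝕜 F] {f : 𝕜 → F} {f' : F} {t : 𝕜}
    (hf : HasDerivAt f f' t) (c : 𝕜) :
    Tendsto (fun ε : 𝕜 => ε⁻¹ • (f (t + ε * c) - f t)) (𝓝[≠] 0) (𝓝 (c • f')) := by
  have hline : HasDerivAt (fun ε : 𝕜 => t + ε * c) c 0 := by
    simpa using ((hasDerivAt_id (0 : 𝕜)).mul_const c).const_add t
  have hcomp : HasDerivAt (fun ε : 𝕜 => f (t + ε * c)) (c • f') 0 :=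
    (by simpa using hf : HasDerivAt f f' (t + 0 * c)).scomp 0 hline
  refine (hasDerivAt_iff_tendsto_slope.mp hcomp).congr fun ε => ?_
  simp [slope_def_module]

theorem conformable_derivative_of_differentiable_general (f : ℝ → ℝ) (t : ℝ)
    (α : ℝ) (hf : DifferentiableAt ℝ f t) :
    Tendsto (fun ε : ℝ => (f (t + ε * t ^ (1 - α)) - f t) / ε) (𝓝[≠] 0)
      (𝓝 (t ^ (1 - α) * deriv f t)) := by
  simpa [div_eq_inv_mul] using hf.hasDerivAt.tendsto_slope_comp_add_mul (t ^ (1 - α))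

theorem conformable_derivative_of_differentiable (f : ℝ → ℝ) (t : ℝ) (ht : 0 < t)
    (α : ℝ) (hα0 : 0 < α) (hα1 : α ≤ 1) (hf : DifferentiableAt ℝ f t) :
    Tendsto (fun ε : ℝ => (f (t + ε * t ^ (1 - α)) - f t) / ε) (𝓝[≠] 0)
      (𝓝 (t ^ (1 - α) * deriv f t)) :=
  conformable_derivative_of_differentiable_general f t α hf
end

section
/- Let k₁, k₂ ∈ ℝ be nonzero and u(x, y) = Real.cos (k₁·x) · Real.cos (k₂·y). Then for all (x, y) and all Δx, Δy with Real.sin (k₁·Δx/2) ≠ 0 and Real.sin (k₂·Δy/2) ≠ 0, the two-dimensional five-point ESDD scheme is exact for the Laplacian: (u(x+Δx, y) − 2·u(x, y) + u(x−Δx, y)) / ((2/k₁)·Real.sin (k₁·Δx/2))² + (u(x, y+Δy) − 2·u(x, y) + u(x, y−Δy)) / ((2/k₂)·Real.sin (k₂·Δy/2))² = −(k₁² + k₂²) · u(x, y). -/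
/-!
A cosine mode is an eigenfunction of the central second difference:
`cos (k (x + h)) - 2 cos (k x) + cos (k (x - h)) = -4 sin² (k h / 2) cos (k x)`,
so dividing by the squared measure `((2 / k) sin (k h / 2))²` returns exactly `-k² cos (k x)`.
For the product mode `cos (k₁ x) cos (k₂ y)` each coordinate difference acts on one factor only,
and the two exact one-dimensional eigenvalues add up to `-(k₁² + k₂²)`.
-/

open Real

theorem cos_add_sub_two_mul_cos_add_cos_sub (a b : ℝ) :
    cos (a + b) - 2 * cos a + cos (a - b) = -4 * sin (b / 2) ^ 2 * cos a := by
  have h_half : cos b = 1 - 2 * sin (b / 2) ^ 2 := by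
    have h := cos_two_mul' (b / 2)
    rw [mul_div_cancel₀ b two_ne_zero, cos_sq'] at h
    linarith
  rw [cos_add, cos_sub, h_half]
  ring

theorem cos_mul_central_second_diff_div_sq {k h : ℝ} (hs : sin (k * h / 2) ≠ 0) (x : ℝ) :
    (cos (k * (x + h)) - 2 * cos (k * x) + cos (k * (x - h))) / ((2 / k) * sin (k * h / 2)) ^ 2
      = -k ^ 2 * cos (k * x) := by
  have hk : k ≠ 0 := by
    rintro rfl
    simp at hs
  rw [mul_add, mul_sub, cos_add_sub_two_mul_cos_add_cos_sub]
  field_simp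
  ring

theorem esdd_2d_five_point_exact_general (k₁ k₂ : ℝ)
    (u : ℝ → ℝ → ℝ) (hu : ∀ x y, u x y = Real.cos (k₁ * x) * Real.cos (k₂ * y)) :
    ∀ x y Δx Δy : ℝ, Real.sin (k₁ * Δx / 2) ≠ 0 → Real.sin (k₂ * Δy / 2) ≠ 0 →
      (u (x + Δx) y - 2 * u x y + u (x - Δx) y) / ((2 / k₁) * Real.sin (k₁ * Δx / 2)) ^ 2
        + (u x (y + Δy) - 2 * u x y + u x (y - Δy)) / ((2 / k₂) * Real.sin (k₂ * Δy / 2)) ^ 2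
        = -(k₁ ^ 2 + k₂ ^ 2) * u x y := by
  intro x y Δx Δy hs₁ hs₂
  simp only [hu]
  calc _ = (cos (k₁ * (x + Δx)) - 2 * cos (k₁ * x) + cos (k₁ * (x - Δx)))
            / ((2 / k₁) * sin (k₁ * Δx / 2)) ^ 2 * cos (k₂ * y)
          + cos (k₁ * x) * ((cos (k₂ * (y + Δy)) - 2 * cos (k₂ * y) + cos (k₂ * (y - Δy)))
            / ((2 / k₂) * sin (k₂ * Δy / 2)) ^ 2) := by ring
    _ = _ := by
      rw [cos_mul_central_second_diff_div_sq hs₁, cos_mul_central_second_diff_div_sq hs₂]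
      ring

theorem esdd_2d_five_point_exact (k₁ k₂ : ℝ) (hk₁ : k₁ ≠ 0) (hk₂ : k₂ ≠ 0)
    (u : ℝ → ℝ → ℝ) (hu : ∀ x y, u x y = Real.cos (k₁ * x) * Real.cos (k₂ * y)) :
    ∀ x y Δx Δy : ℝ, Real.sin (k₁ * Δx / 2) ≠ 0 → Real.sin (k₂ * Δy / 2) ≠ 0 →
      (u (x + Δx) y - 2 * u x y + u (x - Δx) y) / ((2 / k₁) * Real.sin (k₁ * Δx / 2)) ^ 2
        + (u x (y + Δy) - 2 * u x y + u x (y - Δy)) / ((2 / k₂) * Real.sin (k₂ * Δy / 2)) ^ 2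
        = -(k₁ ^ 2 + k₂ ^ 2) * u x y :=
  esdd_2d_five_point_exact_general k₁ k₂ u hu
end
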